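/- arXiv:2307.13114 — 4 statements merged into one kernel-verified Lean document; each statement's English description precedes it below -/
import Mathlib

section
/- Let N, N_Ω ∈ ℕ with N ≥ 2N_Ω + 2 and let V ∈ ℂ^{(N−2N_Ω−1)×(N+1)} be the matrix with rows indexed by n ∈ {N_Ω+1, …, N−N_Ω−1} and columns indexed by ℓ ∈ {0, …, N}, with entries V_{n,ℓ} = e^{−2πi n ℓ/N}. Let S ⊆ {0, …, N} satisfy max_{m ∈ S} m < N − 2N_Ω − 1, let c† ∈ ℂ^{N+1} have support contained in S, and set s = V c†. Then c† is the unique minimizer of ‖s − V c‖₂ over all c ∈ ℂ^{N+1} with support contained in S. -/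
/-!
The residual vanishes at `c†`, so `c†` is a minimizer, and any other minimizer `c` satisfies
`V (c - c†) = 0`. With `ζ = e^{-2πi/N}` the entries are `V n ℓ = (ζ^(n+N_Ω+1))^ℓ`, a rectangular
Vandermonde matrix whose nodes are distinct because `n + N_Ω + 1 < N`. Since `c - c†` is supported
below the number `N - 2N_Ω - 1` of rows, the polynomial with coefficients `c - c†` has more roots
than its degree, hence vanishes.
-/

open Complex Real

noncomputable def l2Norm {m : Type*} [Fintype m] (v : m → ℂ) : ℝ :=
  Real.sqrt (∑ i, ‖v i‖ ^ 2)

open Matrix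

section l2Norm

variable {m : Type*} [Fintype m]

lemma l2Norm_nonneg (v : m → ℂ) : 0 ≤ l2Norm v :=
  Real.sqrt_nonneg _

lemma l2Norm_eq_zero_iff {v : m → ℂ} : l2Norm v = 0 ↔ v = 0 := by
  rw [l2Norm, Real.sqrt_eq_zero (by positivity),
    Finset.sum_eq_zero_iff_of_nonneg fun i _ => by positivity, funext_iff]
  simp

lemma l2Norm_zero : l2Norm (0 : m → ℂ) = 0 :=
  l2Norm_eq_zero_iff.2 rfl

end l2Norm

open Polynomial in
theorem Matrix.eq_zero_of_vandermonde_mulVec_eq_zero {R ι : Type*} [CommRing R] [IsDomain R]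
    [Fintype ι] {m : ℕ} {x : ι → R} (hx : Function.Injective x) {d : Fin m → R}
    (hd : ∀ ℓ : Fin m, Fintype.card ι ≤ ℓ → d ℓ = 0)
    (h : (Matrix.of fun i (ℓ : Fin m) => x i ^ (ℓ : ℕ)) *ᵥ d = 0) : d = 0 := by
  classical
  have heval : ∀ i, (ofFn m d).eval (x i) = 0 := fun i => by
    simpa [ofFn_eq_sum_monomial, eval_finsetSum, Matrix.mulVec, dotProduct, mul_comm]
      using congrFun h i
  have hdeg : (ofFn m d).degree < Fintype.card ι := by
    refine (degree_lt_iff_coeff_zero _ _).2 fun k hk => ?_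
    rcases lt_or_ge k m with hkm | hkm
    · rw [ofFn_coeff_eq_val_of_lt _ hkm]
      exact hd _ hk
    · exact ofFn_coeff_eq_zero_of_ge _ hkm
  have hP : ofFn m d = 0 :=
    eq_zero_of_degree_lt_of_eval_index_eq_zero Finset.univ hx.injOn
      (by simpa using hdeg) fun i _ => heval i
  exact injective_ofFn m (hP.trans (ofFn_zero m).symm)

theorem IsPrimitiveRoot.injective_pow_add {M : Type*} [CommMonoid M] {ζ : M} {N k j : ℕ}
    (hζ : IsPrimitiveRoot ζ N) (hkj : k + j ≤ N) :
    Function.Injective fun n : Fin k => ζ ^ ((n : ℕ) + j) := fun a b hab =>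
  Fin.ext (by have := hζ.pow_inj (by omega) (by omega) hab; omega)

lemma Complex.isPrimitiveRoot_exp_neg (N : ℕ) (hN : N ≠ 0) :
    IsPrimitiveRoot (exp (-2 * π * I / N)) N := by
  simpa [← Complex.exp_neg, neg_div, neg_mul] using (Complex.isPrimitiveRoot_exp N hN).inv

lemma Complex.exp_neg_two_pi_I_mul_mul_div (N a b : ℕ) :
    exp (-2 * π * I * a * b / N) = (exp (-2 * π * I / N) ^ a) ^ b := by
  rw [← pow_mul, ← Complex.exp_nat_mul]
  push_cast
  ring_nf

/-- **Exact recovery by the OMP least-squares step.**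
Let `V ∈ ℂ^{(N−2N_Ω−1)×(N+1)}` have entries `V_{n,ℓ} = e^{−2πi n ℓ/N}` with
rows indexed by `n ∈ {N_Ω+1, …, N−N_Ω−1}` and columns by `ℓ ∈ {0, …, N}`.
If `S ⊆ {0,…,N}` satisfies `max S < N − 2N_Ω − 1`, `c†` is supported in `S`
and `s = V c†`, then `c†` is the unique minimizer of `‖s − V c‖₂` over all
`c` supported in `S`. -/
theorem omp_least_squares_unique_minimizer
    (N NΩ : ℕ) (hN : 2 * NΩ + 2 ≤ N)
    (V : Matrix (Fin (N - 2 * NΩ - 1)) (Fin (N + 1)) ℂ)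
    (hV : ∀ (n : Fin (N - 2 * NΩ - 1)) (ℓ : Fin (N + 1)),
      V n ℓ = Complex.exp (-2 * π * I * ((n : ℕ) + NΩ + 1) * (ℓ : ℕ) / N))
    (S : Finset (Fin (N + 1)))
    (hmax : ∀ m ∈ S, (m : ℕ) < N - 2 * NΩ - 1)
    (cdag : Fin (N + 1) → ℂ) (hsupp : ∀ ℓ, cdag ℓ ≠ 0 → ℓ ∈ S)
    (s : Fin (N - 2 * NΩ - 1) → ℂ) (hs : s = V.mulVec cdag) :
    ∀ c : Fin (N + 1) → ℂ, (∀ ℓ, c ℓ ≠ 0 → ℓ ∈ S) →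
      l2Norm (s - V.mulVec cdag) ≤ l2Norm (s - V.mulVec c) ∧
      (l2Norm (s - V.mulVec c) = l2Norm (s - V.mulVec cdag) → c = cdag) := by
  intro c hc
  subst hs
  rw [sub_self, l2Norm_zero]
  refine ⟨l2Norm_nonneg _, fun h => ?_⟩
  set ζ := exp (-2 * π * I / N)
  have hV_pow : V = Matrix.of fun (n : Fin (N - 2 * NΩ - 1)) (ℓ : Fin (N + 1)) =>
      (ζ ^ ((n : ℕ) + (NΩ + 1))) ^ (ℓ : ℕ) := by
    ext n ℓ
    rw [hV, of_apply, ← Complex.exp_neg_two_pi_I_mul_mul_div]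
    push_cast
    ring_nf
  have hker : V *ᵥ (cdag - c) = 0 := by
    rw [Matrix.mulVec_sub]
    exact l2Norm_eq_zero_iff.1 h
  have hsupp_sub : ∀ ℓ : Fin (N + 1), Fintype.card (Fin (N - 2 * NΩ - 1)) ≤ ℓ →
      (cdag - c) ℓ = 0 := by
    intro ℓ hℓ
    have hℓS : ℓ ∉ S := fun hS => (hmax ℓ hS).not_ge (by simpa using hℓ)
    simp [not_imp_comm.1 (hsupp ℓ) hℓS, not_imp_comm.1 (hc ℓ) hℓS]
  rw [hV_pow] at hker
  exact (sub_eq_zero.1 (Matrix.eq_zero_of_vandermonde_mulVec_eq_zero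
    ((Complex.isPrimitiveRoot_exp_neg N (by omega)).injective_pow_add (by omega))
    hsupp_sub hker)).symm
end

section
/- Let Ω > 0, T > 0 with T < π/Ω, ρ > 0, and let K, K' be positive integers with K ≥ ρ/T and K' ≥ (π ρ T^{−1} + (K+1) Ω T)/(π − Ω T). Set N = K + K', ω₀ = 2π/((N+1)T), and N_Ω = ⌈Ω/ω₀⌉ = ⌈Ω (K+K'+1) T/(2π)⌉. Then (K' − 2(N_Ω − 1))·T ≥ ρ. -/
/-!
Since `N_Ω - 1 < Ω(N+1)T/(2π)`, the left-hand side exceeds `(K' - Ω(K+K'+1)T/π)·T`, which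
equals `(K'(π - ΩT) - (K+1)ΩT)·T/π`; the condition on `K'` says precisely that this is at
least `ρ`.
-/

open Real

lemma rho_le_of_sampling_condition {Ω T ρ K K' : ℝ} (hT : 0 < T) (hΩT : Ω * T < π)
    (hK'cond : (π * ρ * T⁻¹ + (K + 1) * Ω * T) / (π - Ω * T) ≤ K') :
    ρ ≤ (K' - Ω * (K + K' + 1) * T / π) * T := by
  have hcond : π * ρ / T + (K + 1) * Ω * T ≤ K' * (π - Ω * T) := by
    rwa [div_le_iff₀ (sub_pos.mpr hΩT), ← div_eq_mul_inv] at hK'cond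
  have hρ : π * ρ ≤ (K' * (π - Ω * T) - (K + 1) * Ω * T) * T := by
    rw [← div_le_iff₀ hT]; linarith
  calc ρ = π * ρ / π := by field_simp
    _ ≤ (K' * (π - Ω * T) - (K + 1) * Ω * T) * T / π := by gcongr
    _ = (K' - Ω * (K + K' + 1) * T / π) * T := by field_simp; ring

theorem sampling_range_estimate_general
    (Ω T ρ : ℝ) (K K' : ℕ)
    (hΩ : 0 < Ω) (hT : 0 < T) (hTΩ : T < π / Ω)
    (hK'cond : (π * ρ * T⁻¹ + ((K : ℝ) + 1) * Ω * T) / (π - Ω * T) ≤ (K' : ℝ)) :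
    ((K' : ℝ) - 2 * ((⌈Ω * ((K : ℝ) + (K' : ℝ) + 1) * T / (2 * π)⌉ : ℤ) - 1)) * T
      ≥ ρ := by
  have hΩT : Ω * T < π := by rwa [lt_div_iff₀ hΩ, mul_comm] at hTΩ
  have hceil := Int.ceil_lt_add_one (Ω * ((K : ℝ) + (K' : ℝ) + 1) * T / (2 * π))
  calc ρ ≤ ((K' : ℝ) - Ω * (K + K' + 1) * T / π) * T :=
        rho_le_of_sampling_condition hT hΩT hK'cond
    _ = ((K' : ℝ) - 2 * (Ω * (K + K' + 1) * T / (2 * π))) * T := by field_simp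
    _ ≤ _ := by gcongr; linarith

/-- **Sampling-range estimate.**
Under the sampling conditions `T < π/Ω`, `K ≥ ρ/T` and
`K' ≥ (πρT⁻¹ + (K+1)ΩT)/(π − ΩT)`, with `N_Ω = ⌈Ω(K+K'+1)T/(2π)⌉`, one has
`(K' − 2(N_Ω − 1))·T ≥ ρ`. -/
theorem sampling_range_estimate
    (Ω T ρ : ℝ) (K K' : ℕ)
    (hΩ : 0 < Ω) (hT : 0 < T) (hTΩ : T < π / Ω) (hρ : 0 < ρ)
    (hK : 0 < K) (hK' : 0 < K')
    (hKρ : ρ / T ≤ (K : ℝ))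
    (hK'cond : (π * ρ * T⁻¹ + ((K : ℝ) + 1) * Ω * T) / (π - Ω * T) ≤ (K' : ℝ)) :
    ((K' : ℝ) - 2 * ((⌈Ω * ((K : ℝ) + (K' : ℝ) + 1) * T / (2 * π)⌉ : ℤ) - 1)) * T
      ≥ ρ :=
  sampling_range_estimate_general Ω T ρ K K' hΩ hT hTΩ hK'cond
end

section
/- Let λ > 0, Ω > 0, T > 0 with T < π/Ω, ρ > 0, and let K, K' be positive integers with K ≥ ρ/T and K' ≥ (π ρ T^{−1} + (K+1) Ω T)/(π − Ω T). Set N = K + K' and N_Ω = ⌈Ω (K+K'+1) T/(2π)⌉. Let p : ℝ → ℝ be of compact λ-exceedance with parameter ρ, and define the samples p[k] = p((k−K)T) for k = 0, …, N. Then for every integer k with N − 2(N_Ω − 1) < k ≤ N one has M_λ(p[k]) = p[k], i.e., the modulo samples agree with the unfolded samples beyond the index N − 2(N_Ω − 1). -/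
open Real

/-- The centered modulo operator `M_λ(t) = t − 2λ⌊(t+λ)/(2λ)⌋`. -/
noncomputable def centeredModulo (lam t : ℝ) : ℝ :=
  t - 2 * lam * ⌊(t + lam) / (2 * lam)⌋

/-- **Tail samples are unfolded.**
Under the sampling conditions of the recovery corollary, if `p` is of compact
`λ`-exceedance with parameter `ρ`, then for every index `k` with
`N − 2(N_Ω − 1) < k ≤ N` (where `N = K + K'` and
`N_Ω = ⌈Ω(K+K'+1)T/(2π)⌉`), the modulo sample agrees with the unfolded
sample: `M_λ(p((k−K)T)) = p((k−K)T)`. -/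
theorem tail_samples_unfolded
    (lam Ω T ρ : ℝ) (K K' : ℕ)
    (hlam : 0 < lam) (hΩ : 0 < Ω) (hT : 0 < T) (hTΩ : T < π / Ω) (hρ : 0 < ρ)
    (hK : 0 < K) (hK' : 0 < K')
    (hKρ : ρ / T ≤ (K : ℝ))
    (hK'cond : (π * ρ * T⁻¹ + ((K : ℝ) + 1) * Ω * T) / (π - Ω * T) ≤ (K' : ℝ))
    (p : ℝ → ℝ) (hp : ∀ t : ℝ, ρ < |t| → |p t| < lam)
    (k : ℕ)
    (hk1 : ((K : ℤ) + (K' : ℤ)) - 2 * (⌈Ω * ((K : ℝ) + (K' : ℝ) + 1) * T / (2 * π)⌉ - 1)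
      < (k : ℤ))
    (hk2 : k ≤ K + K') :
    centeredModulo lam (p (((k : ℝ) - (K : ℝ)) * T)) = p (((k : ℝ) - (K : ℝ)) * T) := by
  have hπ : (0:ℝ) < π := Real.pi_pos
  have hΩT : Ω * T < π := by
    rw [lt_div_iff₀ hΩ] at hTΩ; linarith [hTΩ]
  have hden : (0:ℝ) < π - Ω * T := by linarith
  -- from hK'cond
  have h1 : π * ρ * T⁻¹ + ((K : ℝ) + 1) * Ω * T ≤ (K' : ℝ) * (π - Ω * T) := by
    rw [div_le_iff₀ hden] at hK'cond; linarith
  have hkey : ρ / T + Ω * ((K : ℝ) + (K' : ℝ) + 1) * T / π ≤ (K' : ℝ) := by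
    rw [div_add_div _ _ (ne_of_gt hT) (ne_of_gt hπ), div_le_iff₀ (by positivity)]
    have h1' := mul_le_mul_of_nonneg_right h1 hT.le
    have e : (π * ρ * T⁻¹ + ((K:ℝ) + 1) * Ω * T) * T
        = π * ρ + ((K:ℝ) + 1) * Ω * T * T := by field_simp
    rw [e] at h1'
    nlinarith [h1']
  set NΩ : ℤ := ⌈Ω * ((K : ℝ) + (K' : ℝ) + 1) * T / (2 * π)⌉ with hNΩ
  have hceil : (NΩ : ℝ) < Ω * ((K : ℝ) + (K' : ℝ) + 1) * T / (2 * π) + 1 :=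
    Int.ceil_lt_add_one _
  have hk1' : ((K : ℤ) + (K' : ℤ)) - 2 * (NΩ - 1) + 1 ≤ (k : ℤ) := hk1
  have hk1R : ((K : ℝ) + (K' : ℝ)) - 2 * ((NΩ : ℝ) - 1) + 1 ≤ (k : ℝ) := by
    exact_mod_cast hk1'
  have hkgt : (K : ℝ) + ρ / T < (k : ℝ) := by
    have h2 : Ω * ((K : ℝ) + (K' : ℝ) + 1) * T / (2 * π) * 2
        = Ω * ((K : ℝ) + (K' : ℝ) + 1) * T / π := by
      field_simp
    nlinarith [hceil, hkey, hk1R]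
  have hx : ρ < ((k : ℝ) - (K : ℝ)) * T := by
    have : ρ / T < (k : ℝ) - (K : ℝ) := by linarith
    calc ρ = ρ / T * T := by field_simp
    _ < ((k : ℝ) - (K : ℝ)) * T := by
        exact mul_lt_mul_of_pos_right this hT
  have habs : ρ < |((k : ℝ) - (K : ℝ)) * T| := lt_of_lt_of_le hx (le_abs_self _)
  have hpb := hp _ habs
  rw [abs_lt] at hpb
  unfold centeredModulo
  have hfl : ⌊(p (((k : ℝ) - (K : ℝ)) * T) + lam) / (2 * lam)⌋ = 0 := by
    rw [Int.floor_eq_zero_iff]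
    constructor
    · apply div_nonneg (by linarith) (by linarith)
    · rw [div_lt_one (by linarith)]; linarith
  rw [hfl]; push_cast; ring
end

section
/- Let λ > 0, Ω > 0, T > 0 with T < π/Ω, ρ > 0, and let K, K' be positive integers with K ≥ ρ/T and K' ≥ (π ρ T^{−1} + (K+1) Ω T)/(π − Ω T). Set N = K + K' and N_Ω = ⌈Ω (K+K'+1) T/(2π)⌉. Let p : ℝ → ℝ be of compact λ-exceedance with parameter ρ, set p[k] = p((k−K)T) and define the residual s[k] = p[k] − M_λ(p[k]) for k = 0, …, N. Then every index ℓ ∈ {0, …, N−1} with s[ℓ+1] ≠ s[ℓ] satisfies ℓ ≤ N − 2(N_Ω − 1); in particular, max_{ℓ ∈ L_λ} ℓ ≤ N − 2(N_Ω − 1), where L_λ = {ℓ : Δs[ℓ] ≠ 0} is the set of fold locations. -/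
/-
A fold at `ℓ` means the residual `s` is nonzero at `ℓ` or `ℓ + 1`. Since `M_λ` is the
identity on `[-λ, λ)`, a nonzero residual at `k` forces `|p((k − K)T)| ≥ λ`, hence
`|(k − K)T| ≤ ρ` by compact exceedance, so `ℓ ≤ K + ρ/T`. The condition on `K'` rearranges to
`ρ/T + Ω(N + 1)T/π ≤ K'`, and `2(N_Ω − 1) < Ω(N + 1)T/π` by the definition of the ceiling.
-/

open Real

theorem centeredModulo_eq_self {lam t : ℝ} (hlo : -lam ≤ t) (hhi : t < lam) :
    centeredModulo lam t = t := by
  have hlam : 0 < 2 * lam := by linarith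
  have hfloor : ⌊(t + lam) / (2 * lam)⌋ = 0 := by
    rw [Int.floor_eq_zero_iff]
    exact ⟨div_nonneg (by linarith) hlam.le, (div_lt_one hlam).mpr (by linarith)⟩
  simp [centeredModulo, hfloor]

theorem abs_le_of_sub_centeredModulo_ne_zero {lam ρ t : ℝ} {p : ℝ → ℝ}
    (hp : ∀ t : ℝ, ρ < |t| → |p t| < lam) (ht : p t - centeredModulo lam (p t) ≠ 0) :
    |t| ≤ ρ := by
  by_contra! hρt
  obtain ⟨hlo, hhi⟩ := abs_lt.mp (hp t hρt)
  exact ht (by rw [centeredModulo_eq_self hlo.le hhi, sub_self])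

theorem natCast_le_of_sub_centeredModulo_ne_zero {lam ρ T : ℝ} {p : ℝ → ℝ} {k K : ℕ}
    (hT : 0 < T) (hp : ∀ t : ℝ, ρ < |t| → |p t| < lam)
    (hk : p (((k : ℝ) - K) * T) - centeredModulo lam (p (((k : ℝ) - K) * T)) ≠ 0) :
    (k : ℝ) ≤ K + ρ / T := by
  have h := (le_abs_self _).trans (abs_le_of_sub_centeredModulo_ne_zero hp hk)
  have : (k : ℝ) - K ≤ ρ / T := (le_div_iff₀ hT).mpr h
  linarith

theorem div_add_mul_div_pi_le_of_sampling_condition {Ω T ρ K K' : ℝ} (hΩT : Ω * T < π)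
    (hK' : (π * ρ * T⁻¹ + (K + 1) * Ω * T) / (π - Ω * T) ≤ K') :
    ρ / T + Ω * (K + K' + 1) * T / π ≤ K' := by
  have hK'π : π * (ρ / T) + Ω * (K + K' + 1) * T ≤ K' * π := by
    have := (div_le_iff₀ (sub_pos.mpr hΩT)).mp hK'
    rw [div_eq_mul_inv]
    linarith
  refine le_of_mul_le_mul_left ?_ pi_pos
  rw [mul_add, mul_div_cancel₀ _ pi_pos.ne']
  linarith

theorem two_mul_ceil_div_two_mul_sub_one_lt (x c : ℝ) :
    2 * ((⌈x / (2 * c)⌉ : ℝ) - 1) < x / c := by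
  have := Int.ceil_lt_add_one (x / (2 * c))
  rw [mul_comm 2 c, ← div_div] at this ⊢
  linarith

theorem fold_locations_bounded_general
    (lam Ω T ρ : ℝ) (K K' : ℕ)
    (hΩ : 0 < Ω) (hT : 0 < T) (hTΩ : T < π / Ω)
    (hK'cond : (π * ρ * T⁻¹ + ((K : ℝ) + 1) * Ω * T) / (π - Ω * T) ≤ (K' : ℝ))
    (p : ℝ → ℝ) (hp : ∀ t : ℝ, ρ < |t| → |p t| < lam)
    (s : ℕ → ℝ)
    (hs : ∀ k : ℕ, k ≤ K + K' →
      s k = p (((k : ℝ) - (K : ℝ)) * T)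
        - centeredModulo lam (p (((k : ℝ) - (K : ℝ)) * T)))
    (ℓ : ℕ) (hℓ : ℓ < K + K') (hfold : s (ℓ + 1) ≠ s ℓ) :
    (ℓ : ℤ) ≤ ((K : ℤ) + (K' : ℤ))
      - 2 * (⌈Ω * ((K : ℝ) + (K' : ℝ) + 1) * T / (2 * π)⌉ - 1) := by
  have hℓρ : (ℓ : ℝ) ≤ K + ρ / T := by
    obtain hsℓ | hsℓ1 : s ℓ ≠ 0 ∨ s (ℓ + 1) ≠ 0 := by
      by_contra! h
      exact hfold (h.2.trans h.1.symm)
    · rw [hs ℓ hℓ.le] at hsℓ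
      exact natCast_le_of_sub_centeredModulo_ne_zero hT hp hsℓ
    · rw [hs (ℓ + 1) hℓ] at hsℓ1
      exact (Nat.cast_le.mpr ℓ.le_succ).trans
        (natCast_le_of_sub_centeredModulo_ne_zero hT hp hsℓ1)
  have hΩT : Ω * T < π := by rw [mul_comm]; exact (lt_div_iff₀ hΩ).mp hTΩ
  have hsampling := div_add_mul_div_pi_le_of_sampling_condition hΩT hK'cond
  have hceil := two_mul_ceil_div_two_mul_sub_one_lt (Ω * ((K : ℝ) + K' + 1) * T) π
  have : (ℓ : ℝ) ≤ K + K' - 2 * ((⌈Ω * ((K : ℝ) + K' + 1) * T / (2 * π)⌉ : ℝ) - 1) :=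
    by linarith
  exact_mod_cast this

/-- **Bound on fold locations.**
Under the sampling conditions of the recovery corollary, if `p` is of compact
`λ`-exceedance with parameter `ρ`, `p[k] = p((k−K)T)` and
`s[k] = p[k] − M_λ(p[k])`, then every index `ℓ ∈ {0,…,N−1}` with
`s[ℓ+1] ≠ s[ℓ]` satisfies `ℓ ≤ N − 2(N_Ω − 1)`, where `N = K + K'` and
`N_Ω = ⌈Ω(K+K'+1)T/(2π)⌉`. -/
theorem fold_locations_bounded
    (lam Ω T ρ : ℝ) (K K' : ℕ)
    (hlam : 0 < lam) (hΩ : 0 < Ω) (hT : 0 < T) (hTΩ : T < π / Ω) (hρ : 0 < ρ)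
    (hK : 0 < K) (hK' : 0 < K')
    (hKρ : ρ / T ≤ (K : ℝ))
    (hK'cond : (π * ρ * T⁻¹ + ((K : ℝ) + 1) * Ω * T) / (π - Ω * T) ≤ (K' : ℝ))
    (p : ℝ → ℝ) (hp : ∀ t : ℝ, ρ < |t| → |p t| < lam)
    (s : ℕ → ℝ)
    (hs : ∀ k : ℕ, k ≤ K + K' →
      s k = p (((k : ℝ) - (K : ℝ)) * T)
        - centeredModulo lam (p (((k : ℝ) - (K : ℝ)) * T)))
    (ℓ : ℕ) (hℓ : ℓ < K + K') (hfold : s (ℓ + 1) ≠ s ℓ) :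
    (ℓ : ℤ) ≤ ((K : ℤ) + (K' : ℤ))
      - 2 * (⌈Ω * ((K : ℝ) + (K' : ℝ) + 1) * T / (2 * π)⌉ - 1) :=
  fold_locations_bounded_general lam Ω T ρ K K' hΩ hT hTΩ hK'cond p hp s hs ℓ hℓ hfold
end
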